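/- arXiv:2401.13093 — 2 statements merged into one kernel-verified Lean document; each statement's English description precedes it below -/
import Mathlib

section
/- (Principal sl₂-triple) Let 𝔤 be a finite-dimensional split semisimple Lie algebra over a field K of characteristic 0, with splitting Cartan subalgebra 𝔥, root system Φ ⊂ 𝔥*, base Δ of simple roots, and positive roots Φ⁺; write 𝔤_β for the root space of β ∈ Φ. For each γ ∈ Φ let h_γ ∈ 𝔥 denote the coroot element, characterized by β(h_γ) = ⟨β, γ^∨⟩ for all β ∈ Φ, and assume {h_α : α ∈ Δ} is a basis of 𝔥. For each α ∈ Δ choose x_α ∈ 𝔤_α and y_α ∈ 𝔤_{−α} with [x_α, y_α] = h_α. Set H = Σ_{γ∈Φ⁺} h_γ, write H = Σ_{α∈Δ} c_α h_α with c_α ∈ K, set X = Σ_{α∈Δ} x_α and Y = Σ_{α∈Δ} c_α y_α. Then (H, X, Y) is an sl₂-triple in 𝔤: [H, X] = 2X, [H, Y] = −2Y, and [X, Y] = H. -/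
/-!
Every simple root `α` takes the value `2` on `H = ∑_{γ > 0} h_γ`: the term `γ = α` contributes
`⟨α, α^∨⟩ = 2`, while the simple reflection `s_α` permutes the other positive roots and negates
their pairing with `α`, so these contribute `0`. Hence `x_α` and `c_α y_α` are eigenvectors of
`ad H` with eigenvalues `2` and `-2`. For distinct simple roots `α ≠ β`, `α - β` is neither zero
nor a root (its coefficients have both signs), so `⁅x_α, y_β⁆ = 0` and `⁅X, Y⁆ = ∑ c_α h_α = H`.

Coefficients along the simple roots are read off with dual functionals `f` satisfying
`f (α_j) = δ_{ij}`, which exist since the simple roots are linearly independent.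
-/

open Finset

theorem LinearIndepOn.exists_dual_apply_eq_ite {ι K M : Type*} [Field K] [AddCommGroup M]
    [Module K M] [DecidableEq ι] {v : ι → M} {s : Set ι} (hv : LinearIndepOn K v s)
    {i : ι} (hi : i ∈ s) :
    ∃ f : Module.Dual K M, ∀ j ∈ s, f (v j) = if j = i then 1 else 0 := by
  let b := Module.Basis.span hv.linearIndependent
  obtain ⟨f, hf⟩ := LinearMap.exists_extend (b.coord ⟨i, hi⟩)
  refine ⟨f, fun j hj => ?_⟩
  have hvj : (b ⟨j, hj⟩ : M) = v j := by simp [b]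
  rw [← hvj, ← Submodule.subtype_apply, ← LinearMap.comp_apply, hf, Module.Basis.coord_apply,
    Module.Basis.repr_self, Finsupp.single_apply]
  simp [eq_comm]

section NatComb

variable {ι K M : Type*} [Field K] [AddCommGroup M] [Module K M] {e : ι → M} {Δ : Finset ι}

variable (K) in
def IsNatCombOn (e : ι → M) (Δ : Finset ι) (v : M) : Prop :=
  ∃ n : ι → ℕ, v = ∑ j ∈ Δ, (n j : K) • e j

variable [DecidableEq ι] {f : Module.Dual K M} {i : ι} {v w : M}

theorem apply_sum_smul_of_apply_eq_ite (hi : i ∈ Δ)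
    (hf : ∀ j ∈ Δ, f (e j) = if j = i then 1 else 0) (a : ι → K) :
    f (∑ j ∈ Δ, a j • e j) = a i := by
  simp [map_sum, sum_congr rfl fun j hj => congrArg (a j * ·) (hf j hj), hi]

theorem IsNatCombOn.exists_apply_eq_natCast (hv : IsNatCombOn K e Δ v) (hi : i ∈ Δ)
    (hf : ∀ j ∈ Δ, f (e j) = if j = i then 1 else 0) : ∃ n : ℕ, f v = n := by
  obtain ⟨n, rfl⟩ := hv
  exact ⟨n i, apply_sum_smul_of_apply_eq_ite hi hf _⟩

theorem IsNatCombOn.apply_ne_neg_one [CharZero K] (hv : IsNatCombOn K e Δ v) (hi : i ∈ Δ)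
    (hf : ∀ j ∈ Δ, f (e j) = if j = i then 1 else 0) : f v ≠ -1 := by
  obtain ⟨n, hn⟩ := hv.exists_apply_eq_natCast hi hf
  rw [hn, ne_eq, eq_neg_iff_add_eq_zero]
  exact_mod_cast n.succ_ne_zero

theorem IsNatCombOn.exists_eq_smul_of_add_eq_smul [CharZero K] (he : LinearIndepOn K e Δ)
    (hv : IsNatCombOn K e Δ v) (hw : IsNatCombOn K e Δ w) (hi : i ∈ Δ) {a : K}
    (h : v + w = a • e i) : ∃ b : K, v = b • e i := by
  obtain ⟨n, rfl⟩ := hv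
  refine ⟨n i, sum_eq_single_of_mem i hi fun j hj hji => ?_⟩
  obtain ⟨f, hf⟩ := he.exists_dual_apply_eq_ite (mem_coe.mpr hj)
  obtain ⟨m, hm⟩ := hw.exists_apply_eq_natCast hj hf
  have hsum := congrArg f h
  rw [map_add, apply_sum_smul_of_apply_eq_ite hj hf, hm, map_smul, hf i hi, if_neg hji.symm,
    smul_zero] at hsum
  have : n j + m = 0 := by exact_mod_cast hsum
  rw [Nat.eq_zero_of_add_eq_zero_right this, Nat.cast_zero, zero_smul]

end NatComb

namespace RootPairing

variable {ι K M N : Type*} [Field K] [CharZero K] [AddCommGroup M] [Module K M]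
  [AddCommGroup N] [Module K N] (P : RootPairing ι K M N) {Δ : Finset ι} {α β γ : ι}

theorem root_ne_neg_root_of_isNatCombOn (hli : LinearIndepOn K P.root Δ) (hα : α ∈ Δ)
    (hγ : IsNatCombOn K P.root Δ (P.root γ)) : P.root γ ≠ -P.root α := by
  classical
  obtain ⟨f, hf⟩ := hli.exists_dual_apply_eq_ite (mem_coe.mpr hα)
  intro h
  apply hγ.apply_ne_neg_one hα hf
  rw [h, map_neg, hf α hα, if_pos rfl]

theorem root_ne_root_sub_root (hli : LinearIndepOn K P.root Δ)
    (hdecomp : ∀ i, IsNatCombOn K P.root Δ (P.root i) ∨ IsNatCombOn K P.root Δ (-P.root i))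
    (hα : α ∈ Δ) (hβ : β ∈ Δ) (hαβ : α ≠ β) (i : ι) : P.root i ≠ P.root α - P.root β := by
  classical
  intro h
  rcases hdecomp i with hi | hi
  · obtain ⟨f, hf⟩ := hli.exists_dual_apply_eq_ite (mem_coe.mpr hβ)
    apply hi.apply_ne_neg_one hβ hf
    rw [h, map_sub, hf α hα, hf β hβ, if_neg hαβ, if_pos rfl, zero_sub]
  · obtain ⟨f, hf⟩ := hli.exists_dual_apply_eq_ite (mem_coe.mpr hα)
    apply hi.apply_ne_neg_one hα hf
    rw [h, neg_sub, map_sub, hf α hα, hf β hβ, if_neg hαβ.symm, if_pos rfl, zero_sub]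

theorem reflectionPerm_mem_erase [DecidableEq ι] [P.IsReduced] (hli : LinearIndepOn K P.root Δ)
    (hdecomp : ∀ i, IsNatCombOn K P.root Δ (P.root i) ∨ IsNatCombOn K P.root Δ (-P.root i))
    {pos : Finset ι} (hpos : ∀ i, i ∈ pos ↔ IsNatCombOn K P.root Δ (P.root i))
    (hα : α ∈ Δ) (hγ : γ ∈ pos.erase α) : P.reflectionPerm α γ ∈ pos.erase α := by
  obtain ⟨hγα, hγ⟩ := mem_erase.mp hγ
  rw [hpos] at hγ
  have hγ_ne_neg := P.root_ne_neg_root_of_isNatCombOn hli hα hγ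
  refine mem_erase.mpr ⟨fun h => hγ_ne_neg ?_, ?_⟩
  · rw [← P.reflectionPerm_self α γ, h, root_reflectionPerm, reflection_apply_self]
  refine (hpos _).mpr <| (hdecomp _).resolve_right fun hneg => ?_
  have hsum : P.root γ + -P.root (P.reflectionPerm α γ) = P.pairing γ α • P.root α := by
    rw [root_reflectionPerm, reflection_apply_root]; abel
  obtain ⟨b, hb⟩ := hγ.exists_eq_smul_of_add_eq_smul hli hneg hα hsum
  exact one_ne_zero <| (LinearIndependent.pair_iff.mp
    (IsReduced.linearIndependent P hγα hγ_ne_neg) 1 (-b) (by rw [hb]; module)).1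

theorem sum_pairing_eq_two [P.IsReduced] (hli : LinearIndepOn K P.root Δ)
    (hdecomp : ∀ i, IsNatCombOn K P.root Δ (P.root i) ∨ IsNatCombOn K P.root Δ (-P.root i))
    {pos : Finset ι} (hpos : ∀ i, i ∈ pos ↔ IsNatCombOn K P.root Δ (P.root i)) (hα : α ∈ Δ) :
    ∑ γ ∈ pos, P.pairing α γ = 2 := by
  classical
  have hα_pos : α ∈ pos := (hpos α).mpr ⟨fun j => if j = α then 1 else 0, by simp [hα]⟩
  have hrest : ∑ γ ∈ pos.erase α, P.pairing α γ = -∑ γ ∈ pos.erase α, P.pairing α γ := by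
    rw [← sum_neg_distrib]
    refine sum_nbij' (P.reflectionPerm α) (P.reflectionPerm α)
      (fun γ hγ => P.reflectionPerm_mem_erase hli hdecomp hpos hα hγ)
      (fun γ hγ => P.reflectionPerm_mem_erase hli hdecomp hpos hα hγ)
      (fun γ _ => P.reflectionPerm_self α γ) (fun γ _ => P.reflectionPerm_self α γ)
      (fun γ _ => ?_)
    rw [pairing_reflectionPerm, pairing_reflectionPerm_self_left, neg_neg]
  rw [← add_sum_erase _ _ hα_pos, pairing_same, self_eq_neg.mp hrest, add_zero]

end RootPairing

section LieBracket

variable {R L : Type*} [CommRing R] [LieRing L] [LieAlgebra R L]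

theorem lie_lie_eq_add_smul {h u v : L} {a b : R} (hu : ⁅h, u⁆ = a • u) (hv : ⁅h, v⁆ = b • v) :
    ⁅h, ⁅u, v⁆⁆ = (a + b) • ⁅u, v⁆ := by
  rw [leibniz_lie, hu, hv, smul_lie, lie_smul, add_smul]

theorem lie_sum_eq_smul_sum {ι : Type*} {s : Finset ι} {h : L} {a : R} {f : ι → L}
    (hf : ∀ i ∈ s, ⁅h, f i⁆ = a • f i) : ⁅h, ∑ i ∈ s, f i⁆ = a • ∑ i ∈ s, f i := by
  rw [lie_sum, smul_sum]
  exact sum_congr rfl hf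

end LieBracket

theorem sum_lie_sum_eq_sum_of_lie_eq_zero {ι L : Type*} [LieRing L] {s : Finset ι} {f g : ι → L}
    (hfg : ∀ i ∈ s, ∀ j ∈ s, i ≠ j → ⁅f i, g j⁆ = 0) :
    ⁅∑ i ∈ s, f i, ∑ j ∈ s, g j⁆ = ∑ i ∈ s, ⁅f i, g i⁆ := by
  rw [sum_lie_sum]
  exact sum_congr rfl fun i hi => sum_eq_single_of_mem i hi fun j hj hji => hfg i hi j hj hji.symm

theorem principal_sl2_triple_general
    {K 𝔤 : Type*} [Field K] [CharZero K] [LieRing 𝔤] [LieAlgebra K 𝔤]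
    (𝔥 : LieSubalgebra K 𝔤)
    {ι : Type*}
    (P : RootPairing ι K (Module.Dual K ↥𝔥) ↥𝔥)
    (hPeval : ∀ (β : Module.Dual K ↥𝔥) (h : ↥𝔥), P.toLinearMap β h = β h)
    (hred : P.IsReduced)
    (Δ pos : Finset ι)
    (hli : LinearIndependent K (fun j : ↥(↑Δ : Set ι) => P.root j.1))
    (hdecomp : ∀ i : ι, (∃ c : ι → ℕ, P.root i = ∑ j ∈ Δ, (c j : K) • P.root j) ∨
      (∃ c : ι → ℕ, P.root i = -∑ j ∈ Δ, (c j : K) • P.root j))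
    (hposchar : ∀ i : ι, i ∈ pos ↔ ∃ c : ι → ℕ, P.root i = ∑ j ∈ Δ, (c j : K) • P.root j)
    (rs : Module.Dual K ↥𝔥 → Submodule K 𝔤)
    (hrs : ∀ (β : Module.Dual K ↥𝔥) (z : 𝔤),
      z ∈ rs β ↔ ∀ h : ↥𝔥, ⁅(h : 𝔤), z⁆ = β h • z)
    (hvanish : ∀ μ : Module.Dual K ↥𝔥, μ ≠ 0 → (∀ i : ι, P.root i ≠ μ) → rs μ = ⊥)
    (x y : ι → 𝔤)
    (hx : ∀ α ∈ Δ, x α ∈ rs (P.root α))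
    (hy : ∀ α ∈ Δ, y α ∈ rs (-P.root α))
    (hxy : ∀ α ∈ Δ, ⁅x α, y α⁆ = ((P.coroot α : ↥𝔥) : 𝔤))
    (H : ↥𝔥) (hH : H = ∑ γ ∈ pos, P.coroot γ)
    (c : ι → K) (hc : H = ∑ α ∈ Δ, c α • P.coroot α)
    (X Y : 𝔤) (hX : X = ∑ α ∈ Δ, x α) (hY : Y = ∑ α ∈ Δ, c α • y α) :
    ⁅(H : 𝔤), X⁆ = (2 : K) • X ∧ ⁅(H : 𝔤), Y⁆ = -((2 : K) • Y) ∧ ⁅X, Y⁆ = (H : 𝔤) := by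
  have hdecomp' (i : ι) : IsNatCombOn K P.root Δ (P.root i) ∨ IsNatCombOn K P.root Δ (-P.root i) :=
    (hdecomp i).imp id fun ⟨n, hn⟩ => ⟨n, neg_eq_iff_eq_neg.mpr hn⟩
  have hH_root (α : ι) (hα : α ∈ Δ) : P.root α H = 2 := by
    rw [← hPeval, hH, map_sum]
    simp_rw [RootPairing.root_coroot_eq_pairing]
    exact P.sum_pairing_eq_two hli hdecomp' hposchar hα
  have hHx (α : ι) (hα : α ∈ Δ) : ⁅(H : 𝔤), x α⁆ = (2 : K) • x α := by
    rw [(hrs _ _).mp (hx α hα), hH_root α hα]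
  have hHy (α : ι) (hα : α ∈ Δ) : ⁅(H : 𝔤), c α • y α⁆ = (-2 : K) • (c α • y α) := by
    rw [lie_smul, (hrs _ _).mp (hy α hα), LinearMap.neg_apply, hH_root α hα, smul_comm]
  have hxy_ne (α : ι) (hα : α ∈ Δ) (β : ι) (hβ : β ∈ Δ) (hαβ : α ≠ β) :
      ⁅x α, c β • y β⁆ = 0 := by
    have hmem : ⁅x α, y β⁆ ∈ rs (P.root α + -P.root β) := (hrs _ _).mpr fun h =>
      lie_lie_eq_add_smul ((hrs _ _).mp (hx α hα) h) ((hrs _ _).mp (hy β hβ) h)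
    rw [← sub_eq_add_neg, hvanish _ (sub_ne_zero.mpr (P.root.injective.ne hαβ))
      (P.root_ne_root_sub_root hli hdecomp' hα hβ hαβ)] at hmem
    rw [lie_smul, (Submodule.mem_bot K).mp hmem, smul_zero]
  refine ⟨hX ▸ lie_sum_eq_smul_sum hHx, ?_, ?_⟩
  · rw [hY, lie_sum_eq_smul_sum hHy, neg_smul]
  · rw [hX, hY, sum_lie_sum_eq_sum_of_lie_eq_zero hxy_ne, hc]
    push_cast
    exact Finset.sum_congr rfl fun α hα => by rw [lie_smul, hxy α hα]

/-- (Principal `sl₂`-triple.)  Let `𝔤` be a finite-dimensional split semisimple Lie algebra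
over a field `K` of characteristic zero, with splitting Cartan subalgebra `𝔥`, root system `P`
(realised as a root pairing between `𝔥*` and `𝔥` via the evaluation pairing, so that the coroot
element `h_γ = P.coroot γ ∈ 𝔥` is characterised by `β(h_γ) = ⟨β, γ^∨⟩` for all roots `β`),
base `Δ` and positive roots `pos`, and root spaces `rs β = {z : 𝔤 | ⁅h, z⁆ = β(h) • z ∀ h ∈ 𝔥}`,
so that `𝔤` decomposes as `𝔥` plus the root spaces and `rs μ = 0` whenever `μ ≠ 0` is not a
root.  Assume the coroots of the simple roots form a basis of `𝔥`.  For each `α ∈ Δ` choose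
`x α ∈ 𝔤_α` and `y α ∈ 𝔤_{-α}` with `⁅x α, y α⁆ = h_α`.  Set `H = ∑_{γ ∈ pos} h_γ`, write
`H = ∑_{α ∈ Δ} c_α • h_α`, and set `X = ∑_{α ∈ Δ} x α` and `Y = ∑_{α ∈ Δ} c_α • y α`.
Then `(H, X, Y)` is an `sl₂`-triple: `⁅H, X⁆ = 2X`, `⁅H, Y⁆ = -2Y` and `⁅X, Y⁆ = H`. -/
theorem principal_sl2_triple
    {K 𝔤 : Type*} [Field K] [CharZero K] [LieRing 𝔤] [LieAlgebra K 𝔤]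
    [FiniteDimensional K 𝔤] [LieAlgebra.IsSemisimple K 𝔤]
    (𝔥 : LieSubalgebra K 𝔤) [𝔥.IsCartanSubalgebra]
    {ι : Type*} [Fintype ι]
    (P : RootPairing ι K (Module.Dual K ↥𝔥) ↥𝔥)
    (hPeval : ∀ (β : Module.Dual K ↥𝔥) (h : ↥𝔥), P.toLinearMap β h = β h)
    (hspan : Submodule.span K (Set.range P.root) = ⊤)
    (hred : P.IsReduced)
    (Δ pos : Finset ι)
    (hli : LinearIndependent K (fun j : ↥(↑Δ : Set ι) => P.root j.1))
    (hdecomp : ∀ i : ι, (∃ c : ι → ℕ, P.root i = ∑ j ∈ Δ, (c j : K) • P.root j) ∨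
      (∃ c : ι → ℕ, P.root i = -∑ j ∈ Δ, (c j : K) • P.root j))
    (hposchar : ∀ i : ι, i ∈ pos ↔ ∃ c : ι → ℕ, P.root i = ∑ j ∈ Δ, (c j : K) • P.root j)
    (rs : Module.Dual K ↥𝔥 → Submodule K 𝔤)
    (hrs : ∀ (β : Module.Dual K ↥𝔥) (z : 𝔤),
      z ∈ rs β ↔ ∀ h : ↥𝔥, ⁅(h : 𝔤), z⁆ = β h • z)
    (hdec : 𝔥.toSubmodule ⊔ (⨆ i : ι, rs (P.root i)) = ⊤)
    (hvanish : ∀ μ : Module.Dual K ↥𝔥, μ ≠ 0 → (∀ i : ι, P.root i ≠ μ) → rs μ = ⊥)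
    (hbasisli : LinearIndependent K (fun j : ↥(↑Δ : Set ι) => P.coroot j.1))
    (hbasisspan : Submodule.span K (P.coroot '' (↑Δ : Set ι)) = ⊤)
    (x y : ι → 𝔤)
    (hx : ∀ α ∈ Δ, x α ∈ rs (P.root α))
    (hy : ∀ α ∈ Δ, y α ∈ rs (-P.root α))
    (hxy : ∀ α ∈ Δ, ⁅x α, y α⁆ = ((P.coroot α : ↥𝔥) : 𝔤))
    (H : ↥𝔥) (hH : H = ∑ γ ∈ pos, P.coroot γ)
    (c : ι → K) (hc : H = ∑ α ∈ Δ, c α • P.coroot α)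
    (X Y : 𝔤) (hX : X = ∑ α ∈ Δ, x α) (hY : Y = ∑ α ∈ Δ, c α • y α) :
    ⁅(H : 𝔤), X⁆ = (2 : K) • X ∧ ⁅(H : 𝔤), Y⁆ = -((2 : K) • Y) ∧ ⁅X, Y⁆ = (H : 𝔤) :=
  principal_sl2_triple_general 𝔥 P hPeval hred Δ pos hli hdecomp hposchar rs hrs hvanish x y hx hy
    hxy H hH c hc X Y hX hY
end

section
/- Let K be a field of characteristic 0, let L be a Lie algebra over K, and let (h, e, f) be an sl₂-triple in L, i.e., [h, e] = 2e, [h, f] = −2f, [e, f] = h. Let M be a finite-dimensional L-module. Then for every negative integer n, the action of e on M is injective on the n-eigenspace of h: if m ∈ M satisfies h • m = (n : K) m and e • m = 0, then m = 0. -/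
/-- If `(h, e, f)` is an `sl₂`-triple in a Lie algebra `L` over a field `K` of characteristic
zero and `M` is a finite-dimensional `L`-module, then for every negative integer `n` the action
of `e` on `M` is injective on the `n`-eigenspace of `h`. -/
theorem sl2Triple_e_injOn_negative_eigenspace
    {K L M : Type*} [Field K] [CharZero K] [LieRing L] [LieAlgebra K L]
    [AddCommGroup M] [Module K M] [LieRingModule L M] [LieModule K L M]
    [FiniteDimensional K M]
    {h e f : L} (ht : IsSl2Triple h e f)
    (n : ℤ) (hn : n < 0) (m : M)
    (hm : ⁅h, m⁆ = (n : K) • m) (hem : ⁅e, m⁆ = 0) : m = 0 := by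
  by_contra hm0
  have P : ht.HasPrimitiveVectorWith m ((n : K)) :=
    { ne_zero := hm0, lie_h := hm, lie_e := hem }
  obtain ⟨k, hk⟩ := P.exists_nat
  have : (n : ℤ) = (k : ℤ) := by exact_mod_cast hk
  omega
end
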